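/- Let m ≥ 1, n ≥ 2. Let w₁, …, w_n > 0 and D ∈ ℝ^{n×n} with D·𝟙 = 0, and suppose Q = diag(w)·D satisfies Q + Qᵀ = B, where B₁₁ = −1, B_{nn} = 1, and B is otherwise zero. Let U : ℝ^m → ℝ be convex and differentiable, set v(y) = ∇U(y) and 𝒰(y) = v(y)ᵀy − U(y). Let F : ℝ^m × ℝ^m → ℝ^m be symmetric, consistent (F(y,y) = y), and entropy-conservative: (v(b) − v(a))ᵀF(a,b) = 𝒰(b) − 𝒰(a) for all a, b. Let S : ℝ^m → ℝ^m satisfy v(y)ᵀ S(y) ≤ 0 for all y, let h > 0, and let y₀, y₁, …, y_n ∈ ℝ^m satisfy, for each i = 1, …, n: w_i ( 2 Σ_{j=1}^n D_{ij} F(y_i, y_j) − h S(y_i) ) + δ_{i1} ( y₁ − y₀ ) = 0, where δ_{i1} is 1 if i = 1 and 0 otherwise. Then U(y_n) ≤ U(y₀). -/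

import Mathlib

/-!
Contract the scheme at node `i` with the entropy variable `v (y i)` and sum over the nodes.
Since `Q + Qᵀ = B` and `Q 𝟙 = 0`, summation by parts together with the symmetry and entropy
conservation of `F` collapses the volume term `2 ∑ᵢⱼ Qᵢⱼ v(yᵢ)ᵀF(yᵢ, yⱼ)` to the boundary values
of `v(y)ᵀy - 𝒰(y) = U(y)`, i.e. to `U(y_n) - U(y_1)`. The source contributes
`-h ∑ᵢ wᵢ v(yᵢ)ᵀS(yᵢ) ≥ 0`, and the upwind term `v(y_1)ᵀ(y_1 - y₀)` dominates `U(y_1) - U(y₀)`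
by the gradient inequality for the convex `U`.
-/

open Finset Matrix

theorem ConvexOn.add_fderiv_sub_le {E : Type*} [NormedAddCommGroup E] [NormedSpace ℝ E]
    {s : Set E} {f : E → ℝ} (hf : ConvexOn ℝ s f) {a x : E} (ha : a ∈ s) (hx : x ∈ s)
    (hfa : DifferentiableAt ℝ f a) :
    f a + fderiv ℝ f a (x - a) ≤ f x := by
  let L : ℝ →ᵃ[ℝ] E := AffineMap.lineMap a x
  have hL0 : L 0 = a := AffineMap.lineMap_apply_zero a x
  have hL1 : L 1 = x := AffineMap.lineMap_apply_one a x
  have hderiv : HasDerivAt (f ∘ L) (fderiv ℝ f a (x - a)) 0 :=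
    hfa.hasFDerivAt.comp_hasDerivAt_of_eq 0 AffineMap.hasDerivAt_lineMap hL0.symm
  have hslope := (hf.comp_affineMap L).le_slope_of_hasDerivAt (x := 0) (y := 1)
    (by simpa [hL0] using ha) (by simpa [hL1] using hx) zero_lt_one hderiv
  rw [slope_def_field] at hslope
  simp only [Function.comp_apply, hL0, hL1, sub_zero, div_one] at hslope
  linarith

theorem two_mul_sum_sum_mul_eq_of_add_transpose_eq_diagonal
    {ι : Type*} [Fintype ι] [DecidableEq ι]
    {Q : Matrix ι ι ℝ} {b : ι → ℝ} (hQ : Q + Qᵀ = diagonal b) (hrow : Q *ᵥ 1 = 0)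
    {G : ι → ι → ℝ} {u : ι → ℝ} (hG : ∀ i j, G j i - G i j = u j - u i) :
    2 * ∑ i, ∑ j, Q i j * G i j = ∑ i, b i * (G i i - u i) := by
  have hrowSum : ∀ i, ∑ j, Q i j = 0 := fun i => by
    simpa [mulVec, dotProduct] using congrFun hrow i
  have hpair : ∀ i j, Q i j * ((G i j - u j) + (G j i - u i)) =
      2 * (Q i j * G i j) - 2 * u i * Q i j := fun i j => by
    linear_combination Q i j * hG i j
  calc 2 * ∑ i, ∑ j, Q i j * G i j
      = ∑ i, ∑ j, Q i j * ((G i j - u j) + (G j i - u i)) := by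
        simp only [hpair, sum_sub_distrib, ← mul_sum, hrowSum, mul_zero, sub_zero]
    _ = ∑ i, ∑ j, (Q + Qᵀ) i j * (G i j - u j) := by
        simp only [mul_add, add_mul, sum_add_distrib, Matrix.add_apply, transpose_apply]
        rw [sum_comm (f := fun i j => Q i j * (G j i - u i))]
    _ = ∑ i, b i * (G i i - u i) := by
        rw [hQ]
        simp [diagonal_apply]

def sbpBoundary (n : ℕ) : Matrix (Fin n) (Fin n) ℝ :=
  of fun i j => if i = j ∧ (i : ℕ) = 0 then -1 else if i = j ∧ (i : ℕ) = n - 1 then 1 else 0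

theorem sbpBoundary_eq_diagonal {n : ℕ} (hn : 2 ≤ n) :
    sbpBoundary n = diagonal
      (Pi.single ⟨n - 1, Nat.sub_one_lt_of_lt hn⟩ 1 - Pi.single ⟨0, Nat.zero_lt_of_lt hn⟩ 1) := by
  ext i j
  by_cases hij : i = j
  · subst hij
    simp only [sbpBoundary, of_apply, diagonal_apply_eq, Pi.sub_apply, Pi.single_apply,
      Fin.ext_iff, true_and]
    split_ifs <;> first | omega | norm_num
  · simp [sbpBoundary, hij]

/-- Single-interval entropy-stability theorem for the entropy-stable DGODE
scheme (Section 6.3.2): for the temporal DG discretization of `dy/dt = S(y)`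
with diagonal-norm SBP operators (`w_i > 0`, `D𝟙 = 0`, `Q + Qᵀ = B` for
`Q = diag(w)D`), a symmetric, consistent, entropy-conservative two-point
numerical state `F`, a source term with nonpositive entropy production
`v(y)ᵀS(y) ≤ 0`, and upwind coupling to the initial data `y₀` at the inflow
face, the convex entropy satisfies `U(y_n) ≤ U(y₀)`. -/
theorem entropy_stable_DGODE
    (m n : ℕ) (hn : 2 ≤ n)
    (w : Fin n → ℝ) (hw : ∀ i, 0 < w i)
    (Dmat : Matrix (Fin n) (Fin n) ℝ)
    (hD1 : Dmat.mulVec (fun _ => 1) = 0)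
    (hSBP : (Matrix.diagonal w * Dmat) + (Matrix.diagonal w * Dmat).transpose =
      Matrix.of (fun (i j : Fin n) =>
        if i = j ∧ (i : ℕ) = 0 then (-1 : ℝ)
        else if i = j ∧ (i : ℕ) = n - 1 then 1 else 0))
    (U : (Fin m → ℝ) → ℝ) (hU : ConvexOn ℝ Set.univ U) (hdiff : Differentiable ℝ U)
    (v : (Fin m → ℝ) → (Fin m → ℝ))
    (hv : ∀ y z, fderiv ℝ U y z = ∑ l, v y l * z l)
    (𝒰 : (Fin m → ℝ) → ℝ) (h𝒰 : ∀ y, 𝒰 y = (∑ l, v y l * y l) - U y)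
    (F : (Fin m → ℝ) → (Fin m → ℝ) → (Fin m → ℝ))
    (hsymm : ∀ a b, F a b = F b a) (hcons : ∀ y, F y y = y)
    (hEC : ∀ a b, (∑ l, (v b l - v a l) * F a b l) = 𝒰 b - 𝒰 a)
    (S : (Fin m → ℝ) → (Fin m → ℝ))
    (hS : ∀ y, (∑ l, v y l * S y l) ≤ 0)
    (h : ℝ) (hh : 0 < h)
    (y0 : Fin m → ℝ) (y : Fin n → (Fin m → ℝ))
    (hscheme : ∀ i, w i • ((2 : ℝ) • (∑ j, Dmat i j • F (y i) (y j)) - h • S (y i))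
        + (if (i : ℕ) = 0 then y i - y0 else 0) = 0) :
    U (y ⟨n - 1, by omega⟩) ≤ U y0 := by
  set i0 : Fin n := ⟨0, by omega⟩
  set iN : Fin n := ⟨n - 1, by omega⟩
  set G : Fin n → Fin n → ℝ := fun i j => v (y i) ⬝ᵥ F (y i) (y j)
  have hG : ∀ i j, G j i - G i j = 𝒰 (y j) - 𝒰 (y i) := fun i j => by
    show v (y j) ⬝ᵥ F (y j) (y i) - v (y i) ⬝ᵥ F (y i) (y j) = _
    rw [← hEC, hsymm (y j) (y i)]
    exact (sub_dotProduct _ _ _).symm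
  have hflux : 2 * ∑ i, ∑ j, (diagonal w * Dmat) i j * G i j = U (y iN) - U (y i0) := by
    have hQ1 : (diagonal w * Dmat) *ᵥ 1 = 0 := by
      rw [← mulVec_mulVec]; exact (congrArg _ hD1).trans (mulVec_zero _)
    rw [two_mul_sum_sum_mul_eq_of_add_transpose_eq_diagonal
      (hSBP.trans (sbpBoundary_eq_diagonal hn)) hQ1 hG]
    simp [G, hcons, h𝒰, Pi.single_apply, sub_mul, sum_sub_distrib, dotProduct, i0, iN]
  have hnode : ∀ i, w i * (2 * ∑ j, Dmat i j * G i j - h * (v (y i) ⬝ᵥ S (y i)))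
      + (if i = i0 then v (y i) ⬝ᵥ (y i - y0) else 0) = 0 := fun i => by
    have := congrArg (v (y i) ⬝ᵥ ·) (hscheme i)
    simpa [G, dotProduct_add, dotProduct_sub, dotProduct_smul, dotProduct_sum, apply_ite,
      Fin.ext_iff, i0] using this
  have hbalance : 2 * ∑ i, ∑ j, (diagonal w * Dmat) i j * G i j
      - h * ∑ i, w i * (v (y i) ⬝ᵥ S (y i)) + v (y i0) ⬝ᵥ (y i0 - y0) = 0 := by
    have := Finset.sum_eq_zero (s := univ) fun i _ => hnode i
    rw [sum_add_distrib, sum_ite_eq'] at this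
    simpa [diagonal_mul, mul_sum, mul_sub, sum_sub_distrib, mul_left_comm, mul_assoc] using this
  have hsource : h * ∑ i, w i * (v (y i) ⬝ᵥ S (y i)) ≤ 0 :=
    mul_nonpos_of_nonneg_of_nonpos hh.le
      (sum_nonpos fun i _ => mul_nonpos_of_nonneg_of_nonpos (hw i).le (hS (y i)))
  have hconv := hU.add_fderiv_sub_le (Set.mem_univ (y i0)) (Set.mem_univ y0) (hdiff (y i0))
  rw [hv, ← dotProduct, ← neg_sub, dotProduct_neg] at hconv
  linarith
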